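/- For any finite graph G with percolation measure, any vertex pair 0,b and set A of vertices, any edge e, and the family of graphs H_p obtained from G by setting the probability of edge e equal to p, the function f(p) := P_{H_p}(0↔b) − P_{H_p}(0↔A)·P_{H_p}(a↔b) is concave in p ∈ [0,1], for any fixed vertex a. Consequently, if f(0) ≥ 0 and f(1) ≥ 0, then f(p) ≥ 0 for all p ∈ [0,1]. -/

import Mathlib

open scoped BigOperators

structure PercGraph (V E : Type) where
  ends : E → V × V
  p : E → ℝ

namespace PercGraph

variable {V E : Type} [DecidableEq V] [Fintype E] [DecidableEq E]

/-- Weight of a configuration: each edge `e` is open (`ω e = true`) with probability `p e`. -/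
def weight (G : PercGraph V E) (ω : E → Bool) : ℝ :=
  ∏ e, if ω e then G.p e else 1 - G.p e

/-- Probability of an event under the percolation measure. -/
noncomputable def prob (G : PercGraph V E) (S : Set (E → Bool)) : ℝ :=
  ∑ ω : E → Bool, Set.indicator S G.weight ω

/-- Expectation of a function under the percolation measure. -/
noncomputable def expec (G : PercGraph V E) (f : (E → Bool) → ℝ) : ℝ :=
  ∑ ω : E → Bool, f ω * G.weight ω

/-- Two vertices are adjacent via an open edge in configuration `ω`. -/
def adj (G : PercGraph V E) (ω : E → Bool) (x y : V) : Prop :=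
  ∃ e, ω e = true ∧ (G.ends e = (x, y) ∨ G.ends e = (y, x))

/-- `x` and `y` are connected by a path of open edges. -/
def Conn (G : PercGraph V E) (ω : E → Bool) (x y : V) : Prop :=
  Relation.ReflTransGen (G.adj ω) x y

/-- The union of the open clusters of the vertices of `A`. -/
def cluster (G : PercGraph V E) (ω : E → Bool) (A : Set V) : Set V :=
  {y | ∃ a ∈ A, G.Conn ω a y}

/-- The event `x ↔ y`. -/
def connEvent (G : PercGraph V E) (x y : V) : Set (E → Bool) :=
  {ω | G.Conn ω x y}

/-- The event `x ↔ A`. -/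
def connTo (G : PercGraph V E) (x : V) (A : Set V) : Set (E → Bool) :=
  {ω | ∃ a ∈ A, G.Conn ω x a}

/-- The event `A ↮ B`. -/
def disconn (G : PercGraph V E) (A B : Set V) : Set (E → Bool) :=
  {ω | ∀ a ∈ A, ∀ b ∈ B, ¬ G.Conn ω a b}

def IncreasingEvent (S : Set (E → Bool)) : Prop :=
  ∀ ⦃ω ω' : E → Bool⦄, (∀ e, ω e = true → ω' e = true) → ω ∈ S → ω' ∈ S

def DecreasingEvent (S : Set (E → Bool)) : Prop :=
  ∀ ⦃ω ω' : E → Bool⦄, (∀ e, ω e = true → ω' e = true) → ω' ∈ S → ω ∈ S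

def IncreasingFun (f : (E → Bool) → ℝ) : Prop :=
  ∀ ⦃ω ω' : E → Bool⦄, (∀ e, ω e = true → ω' e = true) → f ω ≤ f ω'

/-- `f` is determined by the cluster of `A`. -/
def ClusterDetermined (G : PercGraph V E) (A : Set V) (f : (E → Bool) → ℝ) : Prop :=
  ∀ ω ω', G.cluster ω A = G.cluster ω' A → f ω = f ω'

/-- The event `S` is determined by the cluster of `A`. -/
def ClusterDeterminedEvent (G : PercGraph V E) (A : Set V) (S : Set (E → Bool)) : Prop :=
  ∀ ω ω', G.cluster ω A = G.cluster ω' A → (ω ∈ S ↔ ω' ∈ S)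

noncomputable def condProb (G : PercGraph V E) (S T : Set (E → Bool)) : ℝ :=
  G.prob (S ∩ T) / G.prob T

noncomputable def condExpec (G : PercGraph V E) (f : (E → Bool) → ℝ) (T : Set (E → Bool)) : ℝ :=
  G.expec (T.indicator f) / G.prob T

/-- The edge `e` is incident to the vertex `x`. -/
def incident (G : PercGraph V E) (x : V) (e : E) : Prop :=
  (G.ends e).1 = x ∨ (G.ends e).2 = x

/-- The other endpoint of an edge incident to `x`. -/
def otherEnd (G : PercGraph V E) (x : V) (e : E) : V :=
  if (G.ends e).1 = x then (G.ends e).2 else (G.ends e).1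

/-- The graph `G ∖ W`: delete the vertices of `W` and all incident edges. -/
def delete (G : PercGraph V E) (W : Finset V) :
    PercGraph V {e : E // (G.ends e).1 ∉ W ∧ (G.ends e).2 ∉ W} :=
  ⟨fun e => G.ends e.1, fun e => G.p e.1⟩

/-- The graph `G` with the probability of edge `e` replaced by `q`. -/
def withEdgeProb (G : PercGraph V E) (e : E) (q : ℝ) : PercGraph V E :=
  ⟨G.ends, Function.update G.p e q⟩

/-- Contraction of the edge `e`: set its probability to 1. -/
def contract (G : PercGraph V E) (e : E) : PercGraph V E :=
  G.withEdgeProb e 1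

/-- The event that `e` is pivotal for `U`. -/
def pivotal (e : E) (U : Set (E → Bool)) : Set (E → Bool) :=
  {ω | ¬ ((Function.update ω e true ∈ U) ↔ (Function.update ω e false ∈ U))}

/-- All edge probabilities lie in `[0,1]`. -/
def ProbValid (G : PercGraph V E) : Prop := ∀ e, 0 ≤ G.p e ∧ G.p e ≤ 1

end PercGraph

/-!
Only the factor of the weight belonging to `e` depends on `q`, and it is affine in `q`; hence every
probability in `H_q` is affine in `q`, interpolating between `H_0` and `H_1`. For an increasing
event the slope is nonnegative, since flipping `e` open maps configurations of `H_0` in the event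
to configurations of `H_1` in the event with the same weight. So `f` is an affine function minus a
product of two nondecreasing affine functions, which is a convex quadratic; `f` is concave, and a
concave function on `[0,1]` is bounded below by the smaller of its endpoint values.
-/

namespace PercGraph

variable {V E : Type} [Fintype E] [DecidableEq E]

omit [Fintype E] [DecidableEq E] in
theorem Conn.mono {G : PercGraph V E} {ω ω' : E → Bool} (h : ∀ e, ω e = true → ω' e = true)
    {x y : V} (hc : G.Conn ω x y) : G.Conn ω' x y :=
  Relation.ReflTransGen.mono (fun _ _ ⟨e, he, hends⟩ => ⟨e, h e he, hends⟩) x y hc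

omit [Fintype E] [DecidableEq E] in
theorem increasingEvent_connEvent (G : PercGraph V E) (x y : V) :
    IncreasingEvent (G.connEvent x y) :=
  fun _ _ h hc => Conn.mono h hc

omit [Fintype E] [DecidableEq E] in
theorem increasingEvent_connTo (G : PercGraph V E) (x : V) (A : Set V) :
    IncreasingEvent (G.connTo x A) :=
  fun _ _ h ⟨a, ha, hc⟩ => ⟨a, ha, Conn.mono h hc⟩

omit [Fintype E] in
@[simp]
theorem connEvent_withEdgeProb (G : PercGraph V E) (e : E) (q : ℝ) :
    (G.withEdgeProb e q).connEvent = G.connEvent :=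
  rfl

omit [Fintype E] in
@[simp]
theorem connTo_withEdgeProb (G : PercGraph V E) (e : E) (q : ℝ) :
    (G.withEdgeProb e q).connTo = G.connTo :=
  rfl

omit [Fintype E] in
theorem ProbValid.withEdgeProb {G : PercGraph V E} (hp : G.ProbValid) (e : E) {q : ℝ}
    (hq : q ∈ Set.Icc (0 : ℝ) 1) : (G.withEdgeProb e q).ProbValid := by
  intro e'
  by_cases h : e' = e
  · subst h
    simpa [PercGraph.withEdgeProb] using hq
  · simpa [PercGraph.withEdgeProb, Function.update_of_ne h] using hp e'

omit [DecidableEq E] in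
theorem weight_nonneg {G : PercGraph V E} (hp : G.ProbValid) (ω : E → Bool) : 0 ≤ G.weight ω :=
  Finset.prod_nonneg fun e _ => by
    cases ω e
    · simpa using (hp e).2
    · exact (hp e).1

theorem weight_withEdgeProb (G : PercGraph V E) (e : E) (q : ℝ) (ω : E → Bool) :
    (G.withEdgeProb e q).weight ω =
      (if ω e then q else 1 - q) *
        ∏ e' ∈ Finset.univ.erase e, if ω e' then G.p e' else 1 - G.p e' := by
  rw [weight, ← Finset.mul_prod_erase _ _ (Finset.mem_univ e)]
  congr 1
  · simp [PercGraph.withEdgeProb]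
  · exact Finset.prod_congr rfl fun e' he' => by
      simp [PercGraph.withEdgeProb, Function.update_of_ne (Finset.ne_of_mem_erase he')]

theorem weight_withEdgeProb_affine (G : PercGraph V E) (e : E) (q : ℝ) (ω : E → Bool) :
    (G.withEdgeProb e q).weight ω =
      (1 - q) * (G.withEdgeProb e 0).weight ω + q * (G.withEdgeProb e 1).weight ω := by
  simp only [weight_withEdgeProb]
  cases ω e <;> simp

theorem prob_withEdgeProb_affine (G : PercGraph V E) (e : E) (q : ℝ) (S : Set (E → Bool)) :
    (G.withEdgeProb e q).prob S =
      (1 - q) * (G.withEdgeProb e 0).prob S + q * (G.withEdgeProb e 1).prob S := by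
  simp only [prob, Finset.mul_sum, ← Finset.sum_add_distrib]
  refine Finset.sum_congr rfl fun ω _ => ?_
  by_cases h : ω ∈ S
  · simp only [Set.indicator_of_mem h, weight_withEdgeProb_affine G e q ω]
  · simp only [Set.indicator_of_notMem h, mul_zero, add_zero]

theorem weight_withEdgeProb_zero_of_open (G : PercGraph V E) {e : E} {ω : E → Bool}
    (he : ω e = true) : (G.withEdgeProb e 0).weight ω = 0 := by
  simp [weight_withEdgeProb, he]

theorem weight_withEdgeProb_one (G : PercGraph V E) (e : E) (ω : E → Bool) :
    (G.withEdgeProb e 1).weight ω = (G.withEdgeProb e 0).weight (Function.update ω e (!ω e)) := by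
  rw [weight_withEdgeProb, weight_withEdgeProb, Function.update_self]
  congr 1
  · cases ω e <;> simp
  · exact Finset.prod_congr rfl fun e' he' => by
      rw [Function.update_of_ne (Finset.ne_of_mem_erase he')]

theorem prob_withEdgeProb_zero_le_one {G : PercGraph V E} (hp : G.ProbValid) (e : E)
    {S : Set (E → Bool)} (hS : IncreasingEvent S) :
    (G.withEdgeProb e 0).prob S ≤ (G.withEdgeProb e 1).prob S := by
  let flip := fun ω : E → Bool => Function.update ω e (!ω e)
  have hflip : Function.Involutive flip := fun ω => by simp [flip]
  have hprob₁ : (G.withEdgeProb e 1).prob S =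
      ∑ ω, S.indicator (G.withEdgeProb e 1).weight (flip ω) :=
    (Equiv.sum_comp (hflip.toPerm _) _).symm
  rw [hprob₁, prob]
  refine Finset.sum_le_sum fun ω _ => ?_
  have hw₁ : ∀ ω', 0 ≤ (G.withEdgeProb e 1).weight ω' :=
    weight_nonneg (hp.withEdgeProb e (by simp))
  have hw₁_flip : (G.withEdgeProb e 1).weight (flip ω) = (G.withEdgeProb e 0).weight ω := by
    rw [weight_withEdgeProb_one]
    exact congrArg _ (hflip ω)
  by_cases hωS : ω ∈ S
  · cases hωe : ω e with
    | false =>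
      have hflipS : flip ω ∈ S := hS (fun e' he' => by
        by_cases h : e' = e
        · simp [flip, h, hωe]
        · simpa [flip, Function.update_of_ne h] using he') hωS
      rw [Set.indicator_of_mem hωS, Set.indicator_of_mem hflipS, hw₁_flip]
    | true =>
      rw [Set.indicator_of_mem hωS, weight_withEdgeProb_zero_of_open G hωe]
      exact Set.indicator_nonneg (fun ω' _ => hw₁ ω') _
  · rw [Set.indicator_of_notMem hωS]
    exact Set.indicator_nonneg (fun ω' _ => hw₁ ω') _

end PercGraph

theorem concaveOn_affine_sub_mul_affine {p₀ p₁ a₀ a₁ b₀ b₁ : ℝ} (ha : a₀ ≤ a₁) (hb : b₀ ≤ b₁) :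
    ConcaveOn ℝ Set.univ fun q =>
      ((1 - q) * p₀ + q * p₁) - ((1 - q) * a₀ + q * a₁) * ((1 - q) * b₀ + q * b₁) := by
  refine ⟨convex_univ, fun x _ y _ α β hα hβ hαβ => ?_⟩
  obtain rfl : β = 1 - α := by linarith
  simp only [smul_eq_mul]
  -- the concavity defect is `α (1 - α) (x - y)² (a₁ - a₀) (b₁ - b₀)`
  nlinarith [mul_nonneg (mul_nonneg (mul_nonneg (mul_nonneg hα hβ) (sub_nonneg.2 ha))
    (sub_nonneg.2 hb)) (sq_nonneg (x - y))]

theorem edge_prob_concave_general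
    {V E : Type} [Fintype E] [DecidableEq E]
    (G : PercGraph V E) (hp : G.ProbValid) (e : E) (x₀ b a : V) (A : Finset V) :
    let f : ℝ → ℝ := fun q =>
      (G.withEdgeProb e q).prob ((G.withEdgeProb e q).connEvent x₀ b) -
        (G.withEdgeProb e q).prob ((G.withEdgeProb e q).connTo x₀ ↑A) *
          (G.withEdgeProb e q).prob ((G.withEdgeProb e q).connEvent a b)
    ConcaveOn ℝ (Set.Icc (0 : ℝ) 1) f ∧
      (0 ≤ f 0 → 0 ≤ f 1 → ∀ q ∈ Set.Icc (0 : ℝ) 1, 0 ≤ f q) := by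
  intro f
  have hconc : ConcaveOn ℝ (Set.Icc (0 : ℝ) 1) f := by
    have hf : f = fun q => ((1 - q) * (G.withEdgeProb e 0).prob (G.connEvent x₀ b) +
          q * (G.withEdgeProb e 1).prob (G.connEvent x₀ b)) -
        ((1 - q) * (G.withEdgeProb e 0).prob (G.connTo x₀ ↑A) +
          q * (G.withEdgeProb e 1).prob (G.connTo x₀ ↑A)) *
        ((1 - q) * (G.withEdgeProb e 0).prob (G.connEvent a b) +
          q * (G.withEdgeProb e 1).prob (G.connEvent a b)) := by
      funext q
      simp only [f, PercGraph.connEvent_withEdgeProb, PercGraph.connTo_withEdgeProb,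
        PercGraph.prob_withEdgeProb_affine G e q]
    rw [hf]
    exact (concaveOn_affine_sub_mul_affine
      (PercGraph.prob_withEdgeProb_zero_le_one hp e (G.increasingEvent_connTo x₀ ↑A))
      (PercGraph.prob_withEdgeProb_zero_le_one hp e (G.increasingEvent_connEvent a b))).subset
      (Set.subset_univ _) (convex_Icc 0 1)
  refine ⟨hconc, fun h₀ h₁ q hq => (le_min h₀ h₁).trans ?_⟩
  exact hconc.ge_on_segment (Set.left_mem_Icc.2 zero_le_one) (Set.right_mem_Icc.2 zero_le_one)
    (by rwa [segment_eq_Icc zero_le_one])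

/-- the function
`f(q) = P_{H_q}(0↔b) − P_{H_q}(0↔A)·P_{H_q}(a↔b)`, where `H_q` sets the
probability of a fixed edge `e` to `q`, is concave on `[0,1]`; consequently if
`f(0) ≥ 0` and `f(1) ≥ 0` then `f ≥ 0` on `[0,1]`. -/
theorem edge_prob_concave
    {V E : Type} [DecidableEq V] [Fintype E] [DecidableEq E]
    (G : PercGraph V E) (hp : G.ProbValid) (e : E) (x₀ b a : V) (A : Finset V) :
    let f : ℝ → ℝ := fun q =>
      (G.withEdgeProb e q).prob ((G.withEdgeProb e q).connEvent x₀ b) -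
        (G.withEdgeProb e q).prob ((G.withEdgeProb e q).connTo x₀ ↑A) *
          (G.withEdgeProb e q).prob ((G.withEdgeProb e q).connEvent a b)
    ConcaveOn ℝ (Set.Icc (0 : ℝ) 1) f ∧
      (0 ≤ f 0 → 0 ≤ f 1 → ∀ q ∈ Set.Icc (0 : ℝ) 1, 0 ≤ f q) :=
  edge_prob_concave_general G hp e x₀ b a A
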